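/- arXiv:1109.3517 — 2 statements merged into one kernel-verified Lean document; each statement's English description precedes it below -/
import Mathlib

section
/- Let q : ℕ → [0,1] be a probability function with finite m-th moment (∑_k k^m q(k) < ∞), and let p ∈ (0,1). Define q̃(z) for z ≥ 1 as 2p(1-p)^{2z} q(1) + p^{2z+1} q(2z+1) + ∑_{k=2}^{2z} p^k (1-p)^{2z-k+1}[2·C(2z-1,k-1)+C(2z-1,k-2)] q(k). Then ∑_{z=1}^∞ z^m q̃(z) < ∞. -/
/-!
Split `z ^ m * q̃ z` into its three parts. The term with `q 1` is geometric in `z`, and the term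
with `q (2z+1)` is dominated by the `m`-th moment of `q` along odd indices. For the middle sum,
exchange the order of summation: Pascal's rule bounds the coefficient of `q k` by
`2 p^k (1-p)^(2z-k+1) C(2z, k-1)`, and summing over `z` gives at most `2 (m+1)^m p^(-m) k ^ m`.
That bound comes from `n ^ M C(n, s) ≤ (s+M) ^ M C(n+M, s+M)` and the negative binomial series
`∑ₙ C(n+t, t) yⁿ = (1-y)^{-(t+1)}`.
-/

open Finset Filter

theorem Nat.pow_mul_choose_le_mul_choose_add (s M n : ℕ) :
    n ^ M * n.choose s ≤ (s + M) ^ M * (n + M).choose (s + M) := by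
  induction M with
  | zero => simp
  | succ M ih =>
    calc n ^ (M + 1) * n.choose s = n * (n ^ M * n.choose s) := by ring
      _ ≤ (n + M + 1) * ((s + M) ^ M * (n + M).choose (s + M)) := Nat.mul_le_mul (by omega) ih
      _ = (s + M) ^ M * ((n + M + 1).choose (s + M + 1) * (s + M + 1)) := by
          rw [← Nat.add_one_mul_choose_eq]; ring
      _ ≤ (s + M + 1) ^ M * ((n + M + 1).choose (s + M + 1) * (s + M + 1)) :=
          Nat.mul_le_mul_right _ (Nat.pow_le_pow_left (by omega) _)
      _ = (s + (M + 1)) ^ (M + 1) * (n + (M + 1)).choose (s + (M + 1)) := by ring_nf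

theorem Nat.two_mul_choose_succ_add_choose_le (n j : ℕ) :
    2 * n.choose (j + 1) + n.choose j ≤ 2 * (n + 1).choose (j + 1) := by
  rw [Nat.choose_succ_succ']; omega

theorem hasSum_choose_add_mul_geometric {𝕜 : Type*} [NormedField 𝕜] {y : 𝕜}
    (hy : ‖y‖ < 1) (s M : ℕ) :
    HasSum (fun n : ℕ => ((n + M).choose (s + M) : 𝕜) * y ^ n)
      (y ^ s / (1 - y) ^ (s + M + 1)) := by
  have hshift : HasSum (fun j : ℕ => (((j + s) + M).choose (s + M) : 𝕜) * y ^ (j + s))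
      (y ^ s / (1 - y) ^ (s + M + 1)) := by
    have h := (hasSum_choose_mul_geometric_of_norm_lt_one (s + M) hy).mul_left (y ^ s)
    rw [mul_one_div] at h
    have hterm : (fun i : ℕ => y ^ s * (((i + (s + M)).choose (s + M) : 𝕜) * y ^ i)) =
        fun j : ℕ => (((j + s) + M).choose (s + M) : 𝕜) * y ^ (j + s) := by
      funext j
      rw [pow_add, add_assoc]
      ring
    rwa [hterm] at h
  have hinit : ∑ i ∈ range s, ((i + M).choose (s + M) : 𝕜) * y ^ i = 0 :=
    sum_eq_zero fun i hi => by rw [Nat.choose_eq_zero_of_lt (by simp at hi; omega)]; simp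
  exact (hasSum_nat_add_iff' s).1 (by rwa [hinit, sub_zero])

section Geometric

variable {y : ℝ}

theorem pow_mul_choose_mul_geometric_le (hy : 0 ≤ y) (s M n : ℕ) :
    (n : ℝ) ^ M * n.choose s * y ^ n
      ≤ ((s + M : ℕ) : ℝ) ^ M * (((n + M).choose (s + M) : ℝ) * y ^ n) := by
  rw [← mul_assoc]
  exact mul_le_mul_of_nonneg_right (by exact_mod_cast Nat.pow_mul_choose_le_mul_choose_add s M n)
    (pow_nonneg hy n)

theorem summable_pow_mul_choose_mul_geometric (hy0 : 0 ≤ y) (hy1 : y < 1) (s M : ℕ) :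
    Summable fun n : ℕ => (n : ℝ) ^ M * n.choose s * y ^ n :=
  .of_nonneg_of_le (fun _ => by positivity) (pow_mul_choose_mul_geometric_le hy0 s M)
    ((hasSum_choose_add_mul_geometric (by rwa [Real.norm_of_nonneg hy0]) s M).summable.mul_left
      (((s + M : ℕ) : ℝ) ^ M))

theorem tsum_pow_mul_choose_mul_geometric_le (hy0 : 0 ≤ y) (hy1 : y < 1) (s M : ℕ) :
    ∑' n : ℕ, (n : ℝ) ^ M * n.choose s * y ^ n
      ≤ ((s + M : ℕ) : ℝ) ^ M * (y ^ s / (1 - y) ^ (s + M + 1)) := by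
  have h := (hasSum_choose_add_mul_geometric (by rwa [Real.norm_of_nonneg hy0]) s M).mul_left
    (((s + M : ℕ) : ℝ) ^ M)
  exact (Summable.tsum_le_tsum (pow_mul_choose_mul_geometric_le hy0 s M)
    (summable_pow_mul_choose_mul_geometric hy0 hy1 s M) h.summable).trans h.tsum_eq.le

end Geometric

theorem summable_tsum_of_summable_tsum_swap {α β : Type*} {F : α → β → ℝ}
    (hF : ∀ a b, 0 ≤ F a b) (hcol : ∀ b, Summable fun a => F a b)
    (h : Summable fun b => ∑' a, F a b) : Summable fun a => ∑' b, F a b :=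
  ((summable_prod_of_nonneg fun x => hF x.1 x.2).1
    ((summable_prod_of_nonneg fun x => hF x.2 x.1).2 ⟨hcol, h⟩).prod_symm).2

section Drainage

variable {p : ℝ}

def drainageWeight (p : ℝ) (z k : ℕ) : ℝ :=
  p ^ k * (1 - p) ^ (2 * z - k + 1)
    * (2 * Nat.choose (2 * z - 1) (k - 1) + Nat.choose (2 * z - 1) (k - 2))

def drainageColumn (p : ℝ) (m k z : ℕ) : ℝ :=
  if k ∈ Icc 2 (2 * z) then (z : ℝ) ^ m * drainageWeight p z k else 0

theorem drainageColumn_nonneg (hp0 : 0 ≤ p) (hp1 : p ≤ 1) (m k z : ℕ) :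
    0 ≤ drainageColumn p m k z := by
  have : 0 ≤ 1 - p := by linarith
  unfold drainageColumn drainageWeight
  split_ifs <;> positivity

theorem drainageColumn_le (hp0 : 0 ≤ p) (hp1 : p < 1) (m k z : ℕ) :
    drainageColumn p m k z ≤ 2 * p ^ k / (1 - p) ^ (k - 1)
      * (((2 * z : ℕ) : ℝ) ^ m * (2 * z).choose (k - 1) * (1 - p) ^ (2 * z)) := by
  have hy : 0 < 1 - p := by linarith
  unfold drainageColumn
  split_ifs with hk
  swap
  · positivity
  obtain ⟨hk2, hkz⟩ := mem_Icc.1 hk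
  have hexp : (1 - p) ^ (2 * z - k + 1) = (1 - p) ^ (2 * z) / (1 - p) ^ (k - 1) := by
    rw [eq_div_iff (by positivity), ← pow_add]
    congr 1
    omega
  have hpascal : 2 * (2 * z - 1).choose (k - 1) + (2 * z - 1).choose (k - 2)
      ≤ 2 * (2 * z).choose (k - 1) := by
    obtain ⟨j, rfl⟩ : ∃ j, k = j + 2 := ⟨k - 2, by omega⟩
    have h := Nat.two_mul_choose_succ_add_choose_le (2 * z - 1) j
    rwa [Nat.sub_add_cancel (by omega)] at h
  have hcoeff :
      (z : ℝ) ^ m * (2 * ((2 * z - 1).choose (k - 1) : ℝ) + (2 * z - 1).choose (k - 2))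
      ≤ ((2 * z : ℕ) : ℝ) ^ m * (2 * ((2 * z).choose (k - 1) : ℝ)) := by
    exact_mod_cast Nat.mul_le_mul (Nat.pow_le_pow_left (by omega) m) hpascal
  calc (z : ℝ) ^ m * drainageWeight p z k
      = (z : ℝ) ^ m * (2 * ((2 * z - 1).choose (k - 1) : ℝ) + (2 * z - 1).choose (k - 2))
          * (p ^ k * (1 - p) ^ (2 * z) / (1 - p) ^ (k - 1)) := by
        rw [drainageWeight, hexp]; ring
    _ ≤ ((2 * z : ℕ) : ℝ) ^ m * (2 * ((2 * z).choose (k - 1) : ℝ))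
          * (p ^ k * (1 - p) ^ (2 * z) / (1 - p) ^ (k - 1)) := by gcongr
    _ = _ := by ring

theorem summable_drainageColumn (hp0 : 0 < p) (hp1 : p < 1) (m k : ℕ) :
    Summable (drainageColumn p m k) :=
  .of_nonneg_of_le (drainageColumn_nonneg hp0.le hp1.le m k) (drainageColumn_le hp0.le hp1 m k)
    (((summable_pow_mul_choose_mul_geometric (by linarith) (by linarith) (k - 1) m).comp_injective
      (mul_right_injective₀ two_ne_zero)).mul_left (2 * p ^ k / (1 - p) ^ (k - 1)))

theorem tsum_drainageColumn_le (hp0 : 0 < p) (hp1 : p < 1) (m k : ℕ) :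
    ∑' z, drainageColumn p m k z ≤ 2 * ((m : ℝ) + 1) ^ m / p ^ m * (k : ℝ) ^ m := by
  rcases Nat.eq_zero_or_pos k with rfl | hk
  · have hzero : ∀ z, drainageColumn p m 0 z = 0 := fun z => if_neg (by simp)
    rw [tsum_congr hzero, tsum_zero]
    positivity
  set g : ℕ → ℝ := fun n => (n : ℝ) ^ m * n.choose (k - 1) * (1 - p) ^ n
  have hg : Summable g :=
    summable_pow_mul_choose_mul_geometric (by linarith) (by linarith) (k - 1) m
  have hinj : Function.Injective (fun z : ℕ => 2 * z) := mul_right_injective₀ two_ne_zero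
  have hkm : k - 1 + m ≤ (m + 1) * k := by
    have := Nat.le_mul_of_pos_right m hk
    rw [add_mul, one_mul]
    omega
  have hy : 0 < 1 - p := by linarith
  calc ∑' z, drainageColumn p m k z ≤ ∑' z, 2 * p ^ k / (1 - p) ^ (k - 1) * g (2 * z) :=
        Summable.tsum_le_tsum (drainageColumn_le hp0.le hp1 m k)
          (summable_drainageColumn hp0 hp1 m k)
          ((hg.comp_injective hinj).mul_left _)
    _ = 2 * p ^ k / (1 - p) ^ (k - 1) * ∑' z, g (2 * z) := tsum_mul_left
    _ ≤ 2 * p ^ k / (1 - p) ^ (k - 1) * ∑' n, g n :=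
        mul_le_mul_of_nonneg_left (tsum_comp_le_tsum_of_inj hg (fun n => by positivity) hinj)
          (by positivity)
    _ ≤ 2 * p ^ k / (1 - p) ^ (k - 1)
          * (((k - 1 + m : ℕ) : ℝ) ^ m
            * ((1 - p) ^ (k - 1) / (1 - (1 - p)) ^ (k - 1 + m + 1))) := by
        gcongr
        exact tsum_pow_mul_choose_mul_geometric_le (by linarith) (by linarith) (k - 1) m
    _ = 2 / p ^ m * ((k - 1 + m : ℕ) : ℝ) ^ m := by
        rw [sub_sub_cancel, show k - 1 + m + 1 = k + m by omega, pow_add]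
        field_simp
    _ ≤ 2 / p ^ m * (((m + 1) * k : ℕ) : ℝ) ^ m := by gcongr
    _ = 2 * ((m : ℝ) + 1) ^ m / p ^ m * (k : ℝ) ^ m := by
        rw [Nat.cast_mul, mul_pow]; push_cast; ring

theorem summable_pow_mul_sum_drainageWeight (hp0 : 0 < p) (hp1 : p < 1) (m : ℕ) {q : ℕ → ℝ}
    (hq : ∀ n, 0 ≤ q n) (hmom : Summable fun k : ℕ => (k : ℝ) ^ m * q k) :
    Summable fun z : ℕ =>
      (z : ℝ) ^ m * ∑ k ∈ Icc 2 (2 * z), drainageWeight p z k * q k := by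
  have hF : ∀ z k, 0 ≤ drainageColumn p m k z * q k := fun z k =>
    mul_nonneg (drainageColumn_nonneg hp0.le hp1.le m k z) (hq k)
  have hcol : Summable fun k => ∑' z, drainageColumn p m k z * q k := by
    refine .of_nonneg_of_le (fun k => tsum_nonneg (hF · k)) (fun k => ?_)
      (hmom.mul_left (2 * ((m : ℝ) + 1) ^ m / p ^ m))
    rw [tsum_mul_right, ← mul_assoc]
    exact mul_le_mul_of_nonneg_right (tsum_drainageColumn_le hp0 hp1 m k) (hq k)
  refine (summable_tsum_of_summable_tsum_swap hF
    (fun k => (summable_drainageColumn hp0 hp1 m k).mul_right (q k)) hcol).congr fun z => ?_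
  rw [tsum_eq_sum (s := Icc 2 (2 * z)) fun k hk => by simp [drainageColumn, hk], mul_sum]
  refine sum_congr rfl fun k hk => ?_
  rw [drainageColumn, if_pos hk, mul_assoc]

end Drainage

theorem summable_pow_mul_pow_two_mul_add_one (m : ℕ) {p : ℝ} (hp0 : 0 ≤ p) (hp1 : p ≤ 1)
    {q : ℕ → ℝ} (hq : ∀ n, 0 ≤ q n) (hmom : Summable fun k : ℕ => (k : ℝ) ^ m * q k) :
    Summable fun z : ℕ => (z : ℝ) ^ m * (p ^ (2 * z + 1) * q (2 * z + 1)) := by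
  have hinj : Function.Injective (fun z : ℕ => 2 * z + 1) := fun a b h => by simp only at h; omega
  refine (hmom.comp_injective hinj).of_nonneg_of_le (fun z => ?_) (fun z => ?_)
  · have := hq (2 * z + 1)
    positivity
  · calc (z : ℝ) ^ m * (p ^ (2 * z + 1) * q (2 * z + 1)) ≤ (z : ℝ) ^ m * q (2 * z + 1) := by
          gcongr
          exact mul_le_of_le_one_left (hq _) (pow_le_one₀ hp0 hp1)
      _ ≤ ((2 * z + 1 : ℕ) : ℝ) ^ m * q (2 * z + 1) := by
          gcongr
          · exact hq _
          · omega

theorem stmt1_general (m : ℕ) (p : ℝ) (hp : p ∈ Set.Ioo (0 : ℝ) 1)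
    (q : ℕ → ℝ) (hq : ∀ n, 0 ≤ q n)
    (hmom : Summable fun k : ℕ => (k : ℝ) ^ m * q k)
    (qt : ℕ → ℝ)
    (hqt : ∀ z : ℕ, 1 ≤ z →
      qt z = 2 * p * (1 - p) ^ (2 * z) * q 1 + p ^ (2 * z + 1) * q (2 * z + 1)
        + ∑ k ∈ Finset.Icc 2 (2 * z),
            p ^ k * (1 - p) ^ (2 * z - k + 1)
              * (2 * Nat.choose (2 * z - 1) (k - 1) + Nat.choose (2 * z - 1) (k - 2)) * q k) :
    Summable fun z : ℕ => (z : ℝ) ^ m * qt z := by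
  obtain ⟨hp0, hp1⟩ := hp
  have hgeom : Summable fun z : ℕ => (z : ℝ) ^ m * (2 * p * (1 - p) ^ (2 * z) * q 1) := by
    have hr : ‖(1 - p) ^ 2‖ < 1 := by
      rw [Real.norm_of_nonneg (by positivity)]
      nlinarith
    refine ((summable_pow_mul_geometric_of_norm_lt_one m hr).mul_left (2 * p * q 1)).congr
      fun z => ?_
    rw [← pow_mul]
    ring
  refine ((hgeom.add (summable_pow_mul_pow_two_mul_add_one m hp0.le hp1.le hq hmom)).add
    (summable_pow_mul_sum_drainageWeight hp0 hp1 m hq hmom)).congr_atTop ?_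
  filter_upwards [eventually_ge_atTop 1] with z hz
  rw [hqt z hz]
  simp only [drainageWeight]
  ring

/-- If `q` has finite `m`-th moment, then the law `q̃` of the absolute increment of the
generalized drainage network walk also has finite `m`-th moment. -/
theorem stmt1 (m : ℕ) (p : ℝ) (hp : p ∈ Set.Ioo (0 : ℝ) 1)
    (q : ℕ → ℝ) (hq : ∀ n, 0 ≤ q n) (hqsum : ∑' n, q n = 1)
    (hmom : Summable fun k : ℕ => (k : ℝ) ^ m * q k)
    (qt : ℕ → ℝ)
    (hqt : ∀ z : ℕ, 1 ≤ z →
      qt z = 2 * p * (1 - p) ^ (2 * z) * q 1 + p ^ (2 * z + 1) * q (2 * z + 1)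
        + ∑ k ∈ Finset.Icc 2 (2 * z),
            p ^ k * (1 - p) ^ (2 * z - k + 1)
              * (2 * Nat.choose (2 * z - 1) (k - 1) + Nat.choose (2 * z - 1) (k - 2)) * q k) :
    Summable fun z : ℕ => (z : ℝ) ^ m * qt z :=
  stmt1_general m p hp q hq hmom qt hqt
end

section
/- In the generalized drainage network with p ∈ (0,1) and offspring distribution q, let (U₁(m), V₁(m)) be the increment pair of the difference walk Y conditioned on Y₀ = m. Then 0 < sup_{m≥1} P((U₁(m), V₁(m)) = (0,0)) < 1; i.e., the probability that two walks at distance m move by the same amount in one step is uniformly bounded away from both 0 and 1 over m. -/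
open MeasureTheory ProbabilityTheory

/-- The `j`-th site in the ordering of `ℤ` by distance to `x`, where ties at equal distance are
broken by the coin `θ` (`θ = true`: right site first; `θ = false`: left site first). -/
def siteSeq (θ : Bool) (x : ℤ) (j : ℕ) : ℤ :=
  if j = 0 then x
  else if j % 2 = 1 then (if θ then x + ((j + 1) / 2 : ℕ) else x - ((j + 1) / 2 : ℕ))
  else (if θ then x - (j / 2 : ℕ) else x + (j / 2 : ℕ))

/-- The `k`-th (1-indexed) open site nearest to `x` in the environment `η`, ties broken by the
coin `θ`. -/
noncomputable def kthOpen (η : ℤ → Bool) (θ : Bool) (x : ℤ) (k : ℕ) : ℤ :=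
  siteSeq θ x (Nat.nth (fun j => η (siteSeq θ x j) = true) (k - 1))

/-!
One step of a walk only inspects finitely many sites, so prescribing the states of at most
`2k + 1` sites, each with rank `k`, is an event of probability at least `w ^ (2k + 1)` with
`w = min p (1 - p) * q k / 2`, uniformly in `m`. For `m = 1`, opening the `k` nearest sites of
`0` and `1` with right-first coins forces equal displacements. For every `m ≥ 1` some such
configuration forces different displacements: opposite coins at `0` and `m` when `k ≥ 2`, a
closed site at `m` when `k = 1`.
-/

open scoped ENNReal

lemma siteSeq_eq_add (θ : Bool) (x : ℤ) (j : ℕ) : siteSeq θ x j = x + siteSeq θ 0 j := by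
  unfold siteSeq; split_ifs <;> simp <;> ring

lemma siteSeq_false_zero (j : ℕ) : siteSeq false 0 j = - siteSeq true 0 j := by
  unfold siteSeq; split_ifs <;> simp_all

lemma siteSeq_true_zero_ne_zero {j : ℕ} (hj : j ≠ 0) : siteSeq true 0 j ≠ 0 := by
  unfold siteSeq; split_ifs <;> simp <;> omega

lemma siteSeq_true_one (x : ℤ) : siteSeq true x 1 = x + 1 := by
  simp [siteSeq]

def window (θ : Bool) (x : ℤ) (k : ℕ) : Finset ℤ :=
  (Finset.range k).image (siteSeq θ x)

lemma card_window_le (θ : Bool) (x : ℤ) (k : ℕ) : (window θ x k).card ≤ k :=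
  Finset.card_image_le.trans (Finset.card_range k).le

lemma siteSeq_mem_window {θ : Bool} {x : ℤ} {k j : ℕ} (hj : j < k) :
    siteSeq θ x j ∈ window θ x k :=
  Finset.mem_image_of_mem _ (Finset.mem_range.2 hj)

lemma self_mem_window {θ : Bool} {x : ℤ} {k : ℕ} (hk : 1 ≤ k) : x ∈ window θ x k :=
  siteSeq_mem_window (j := 0) hk

lemma kthOpen_of_window_open {η : ℤ → Bool} {θ : Bool} {x : ℤ} {k : ℕ} (hk : 1 ≤ k)
    (h : ∀ z ∈ window θ x k, η z = true) : kthOpen η θ x k = siteSeq θ x (k - 1) := by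
  unfold kthOpen
  rw [Nat.nth_of_forall fun j hj => h _ (siteSeq_mem_window (by omega))]

lemma kthOpen_one_of_closed {η : ℤ → Bool} {x : ℤ} (hx : η x = false) (hx1 : η (x + 1) = true) :
    kthOpen η true x 1 = x + 1 := by
  classical
  have hcount : Nat.count (fun j => η (siteSeq true x j) = true) 1 = 0 := by
    simp [Nat.count_succ, siteSeq, hx]
  have hnth := Nat.nth_count (p := fun j => η (siteSeq true x j) = true) (n := 1)
    (by simpa [siteSeq_true_one] using hx1)
  rw [hcount] at hnth
  simp [kthOpen, hnth, siteSeq_true_one]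

/-- `σ z` packs the state of site `z` (open, tie-breaking coin, rank); `drainageStep σ x` is the
position `Z^x₁` of the walk from `x` after one step. -/
noncomputable def drainageStep (σ : ℤ → Bool × Bool × ℕ) (x : ℤ) : ℤ :=
  kthOpen (fun z => (σ z).1) (σ x).2.1 x (σ x).2.2

lemma drainageStep_one_sub_drainageStep_zero {k : ℕ} (hk : 1 ≤ k) {σ : ℤ → Bool × Bool × ℕ}
    (hσ : ∀ z ∈ window true 0 k ∪ window true 1 k, σ z = (true, true, k)) :
    drainageStep σ 1 - drainageStep σ 0 = 1 := by
  have hopen : ∀ z ∈ window true 0 k ∪ window true 1 k, (σ z).1 = true := by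
    intro z hz; simp [hσ z hz]
  have h0 := hσ 0 (Finset.mem_union_left _ (self_mem_window hk))
  have h1 := hσ 1 (Finset.mem_union_right _ (self_mem_window hk))
  simp only [drainageStep, h0, h1]
  rw [kthOpen_of_window_open hk fun z hz => hopen z (Finset.mem_union_left _ hz),
    kthOpen_of_window_open hk fun z hz => hopen z (Finset.mem_union_right _ hz),
    siteSeq_eq_add true 1]
  ring

/-- For `k ≥ 2` the walks from `0` and `m` break ties in opposite directions, so they are
displaced by `-s` and `s` with `s = siteSeq true 0 (k - 1) ≠ 0`. -/
lemma drainageStep_sub_ne_of_two_le {k : ℕ} (hk : 2 ≤ k) {m : ℤ} (hm : m ≠ 0)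
    {σ : ℤ → Bool × Bool × ℕ}
    (hσ : ∀ z ∈ window false 0 k ∪ window true m k, σ z = (true, decide (z ≠ 0), k)) :
    drainageStep σ m - drainageStep σ 0 ≠ m := by
  have hopen : ∀ z ∈ window false 0 k ∪ window true m k, (σ z).1 = true := by
    intro z hz; simp [hσ z hz]
  have h0 := hσ 0 (Finset.mem_union_left _ (self_mem_window (by omega)))
  have hm' := hσ m (Finset.mem_union_right _ (self_mem_window (by omega)))
  simp only [drainageStep, h0, hm', ne_eq, hm, not_false_eq_true, decide_true,
    decide_false, not_true_eq_false]
  rw [kthOpen_of_window_open (by omega) fun z hz => hopen z (Finset.mem_union_left _ hz),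
    kthOpen_of_window_open (by omega) fun z hz => hopen z (Finset.mem_union_right _ hz),
    siteSeq_eq_add true m, siteSeq_false_zero]
  have := siteSeq_true_zero_ne_zero (j := k - 1) (by omega)
  omega

/-- For `k = 1` the walk from `0` stays put while the closed site `m` pushes the walk from `m`
to `m + 1`. -/
lemma drainageStep_sub_ne_of_one {m : ℤ} (hm : m ≠ 0) {σ : ℤ → Bool × Bool × ℕ}
    (hσ : ∀ z ∈ ({0, m, m + 1} : Finset ℤ), σ z = (decide (z ≠ m), true, 1)) :
    drainageStep σ m - drainageStep σ 0 ≠ m := by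
  have h0 := hσ 0 (by simp)
  have hm' := hσ m (by simp)
  have hm1 := hσ (m + 1) (by simp)
  simp only [ne_eq, Ne.symm hm, not_false_eq_true, decide_true, not_true_eq_false,
    decide_false, add_eq_left, one_ne_zero] at h0 hm' hm1
  have hstep0 : drainageStep σ 0 = 0 := by
    simp only [drainageStep, h0]
    rw [kthOpen_of_window_open le_rfl] <;> simp [window, siteSeq, h0]
  have hstepm : drainageStep σ m = m + 1 := by
    simp only [drainageStep, hm']
    exact kthOpen_one_of_closed (by simp [hm']) (by simp [hm1])
  omega

lemma exists_config_drainageStep_sub_ne {k : ℕ} (hk : 1 ≤ k) {m : ℤ} (hm : m ≠ 0) :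
    ∃ (F : Finset ℤ) (c : ℤ → Bool × Bool × ℕ), F.card ≤ 2 * k + 1 ∧ (∀ z, (c z).2.2 = k) ∧
      ∀ σ, (∀ z ∈ F, σ z = c z) → drainageStep σ m - drainageStep σ 0 ≠ m := by
  obtain rfl | hk2 := eq_or_lt_of_le hk
  · refine ⟨{0, m, m + 1}, fun z => (decide (z ≠ m), true, 1), ?_, fun _ => rfl,
      fun σ hσ => drainageStep_sub_ne_of_one hm hσ⟩
    exact (Finset.card_le_three).trans (by omega)
  · refine ⟨window false 0 k ∪ window true m k, fun z => (true, decide (z ≠ 0), k), ?_,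
      fun _ => rfl, fun σ hσ => drainageStep_sub_ne_of_two_le hk2 hm hσ⟩
    calc _ ≤ (window false 0 k).card + (window true m k).card := Finset.card_union_le _ _
      _ ≤ 2 * k + 1 := by linarith [card_window_le false 0 k, card_window_le true m k]

lemma exists_config_drainageStep_one_sub_zero {k : ℕ} (hk : 1 ≤ k) :
    ∃ (F : Finset ℤ) (c : ℤ → Bool × Bool × ℕ), F.card ≤ 2 * k + 1 ∧ (∀ z, (c z).2.2 = k) ∧
      ∀ σ, (∀ z ∈ F, σ z = c z) → drainageStep σ 1 - drainageStep σ 0 = 1 := by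
  refine ⟨window true 0 k ∪ window true 1 k, fun _ => (true, true, k), ?_, fun _ => rfl,
    fun σ hσ => drainageStep_one_sub_drainageStep_zero hk hσ⟩
  calc _ ≤ (window true 0 k).card + (window true 1 k).card := Finset.card_union_le _ _
    _ ≤ 2 * k + 1 := by linarith [card_window_le true 0 k, card_window_le true 1 k]

/-- `X` need not be measurable, so `prob_compl_eq_one_sub` is unavailable; the fibre masses
summing to one take its place. -/
lemma measure_compl_preimage_le {Ω β : Type*} [MeasurableSpace Ω] {μ : Measure Ω} [Countable β]
    (X : Ω → β) (hX : ∑' s, μ (X ⁻¹' {s}) = 1) (S : Set β) :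
    μ ((X ⁻¹' S)ᶜ) ≤ 1 - μ (X ⁻¹' S) := by
  have hfib : ∀ S' : Set β, μ (X ⁻¹' S') ≤ ∑' s : S', μ (X ⁻¹' {(s : β)}) := fun S' => by
    rw [← Set.biUnion_preimage_singleton]
    exact measure_biUnion_le μ S'.to_countable _
  have hsum : μ (X ⁻¹' S) + μ ((X ⁻¹' S)ᶜ) ≤ 1 := calc
    μ (X ⁻¹' S) + μ ((X ⁻¹' S)ᶜ)
      ≤ ∑' s : S, μ (X ⁻¹' {(s : β)}) + ∑' s : ↥Sᶜ, μ (X ⁻¹' {(s : β)}) := by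
        rw [← Set.preimage_compl]; exact add_le_add (hfib S) (hfib Sᶜ)
    _ = 1 := by
        rw [ENNReal.summable.tsum_add_tsum_compl (f := fun s => μ (X ⁻¹' {s}))
          ENNReal.summable, hX]
  exact ENNReal.le_sub_of_add_le_left (ne_top_of_le_ne_top ENNReal.one_ne_top
    (le_self_add.trans hsum)) hsum

namespace ProbabilityTheory.iIndepFun

variable {Ω ι β : Type*} [MeasurableSpace Ω] {μ : Measure Ω} [MeasurableSpace β]
  [DiscreteMeasurableSpace β] {T : ι → Ω → β}

lemma pow_card_le_measure_biInter_preimage (hT : iIndepFun T μ) {w : ℝ≥0∞}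
    {F : Finset ι} {S : ι → Set β} (hw : ∀ i ∈ F, w ≤ μ (T i ⁻¹' S i)) :
    w ^ F.card ≤ μ (⋂ i ∈ F, T i ⁻¹' S i) := by
  rw [hT.measure_inter_preimage_eq_mul F fun i _ => .of_discrete, ← Finset.prod_const]
  exact Finset.prod_le_prod' hw

lemma measure_compl_biInter_preimage_le [Countable β] [IsProbabilityMeasure μ]
    (hT : iIndepFun T μ) (hmass : ∀ i, ∑' s, μ (T i ⁻¹' {s}) = 1) (F : Finset ι)
    (S : ι → Set β) :
    μ ((⋂ i ∈ F, T i ⁻¹' S i)ᶜ) ≤ 1 - μ (⋂ i ∈ F, T i ⁻¹' S i) := by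
  classical
  have hprod : ∀ (G : Finset ι) (S' : ι → Set β),
      μ (⋂ i ∈ G, T i ⁻¹' S' i) = ∏ i ∈ G, μ (T i ⁻¹' S' i) := fun G S' =>
    hT.measure_inter_preimage_eq_mul G fun i _ => .of_discrete
  induction F using Finset.induction_on with
  | empty => simp
  | @insert a F ha ih =>
    set X := T a ⁻¹' S a
    set B := ⋂ i ∈ F, T i ⁻¹' S i
    have hins : ⋂ i ∈ insert a F, T i ⁻¹' S i = X ∩ B := Finset.set_biInter_insert _ _ _
    have hXB : μ (X ∩ B) = μ X * μ B := by
      rw [← hins, hprod, Finset.prod_insert ha, hprod]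
    -- independence also holds with `S a` replaced by its complement
    have hXcB : μ (Xᶜ ∩ B) = μ Xᶜ * μ B := by
      have hS' : ∀ i ∈ F, Function.update S a (S a)ᶜ i = S i := fun i hi =>
        Function.update_of_ne (ne_of_mem_of_not_mem hi ha) _ _
      have h := hprod (insert a F) (Function.update S a (S a)ᶜ)
      rw [Finset.set_biInter_insert, Finset.prod_insert ha, Finset.prod_congr rfl
        fun i hi => by rw [hS' i hi], Set.iInter₂_congr fun i hi => by rw [hS' i hi],
        ← hprod, Function.update_self] at h
      exact h
    calc μ ((⋂ i ∈ insert a F, T i ⁻¹' S i)ᶜ) ≤ μ (Bᶜ ∪ (Xᶜ ∩ B)) := by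
          rw [hins]; refine measure_mono fun ω hω => ?_
          by_cases hωB : ω ∈ B
          · exact .inr ⟨fun hωX => hω ⟨hωX, hωB⟩, hωB⟩
          · exact .inl hωB
      _ ≤ (1 - μ B) + (1 - μ X) * μ B := by
          refine (measure_union_le _ _).trans (add_le_add ih ?_)
          rw [hXcB]
          exact mul_le_mul_left (measure_compl_preimage_le _ (hmass a) _) _
      _ = 1 - μ X * μ B := by
          rw [ENNReal.sub_mul fun _ _ => measure_ne_top μ B, one_mul]
          exact tsub_add_tsub_cancel prob_le_one (mul_le_of_le_one_left zero_le prob_le_one)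
      _ = 1 - μ (⋂ i ∈ insert a F, T i ⁻¹' S i) := by rw [hins, hXB]

end ProbabilityTheory.iIndepFun

noncomputable def siteLaw (p : ℝ) (q : ℕ → ℝ) (s : Bool × Bool × ℕ) : ℝ≥0∞ :=
  ENNReal.ofReal (if s.1 then p else 1 - p) * (1 / 2) * ENNReal.ofReal (q s.2.2)

lemma tsum_siteLaw {p : ℝ} (hp : p ∈ Set.Ioo (0 : ℝ) 1) {q : ℕ → ℝ} (hq : ∀ n, 0 ≤ q n)
    (hqsum : ∑' n, q n = 1) : ∑' s, siteLaw p q s = 1 := by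
  have hsummable : Summable q := by
    by_contra h
    simp [tsum_eq_zero_of_not_summable h] at hqsum
  have hq1 : ∑' n, ENNReal.ofReal (q n) = 1 := by
    rw [← ENNReal.ofReal_tsum_of_nonneg hq hsummable, hqsum, ENNReal.ofReal_one]
  have hp1 : ENNReal.ofReal p + ENNReal.ofReal (1 - p) = 1 := by
    rw [← ENNReal.ofReal_add hp.1.le (by linarith [hp.2]), add_sub_cancel, ENNReal.ofReal_one]
  simp only [siteLaw, ENNReal.tsum_prod', ENNReal.tsum_mul_left, hq1, mul_one, tsum_bool,
    Bool.false_eq_true, if_false, if_true, ← mul_add, ← add_mul]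
  rw [ENNReal.add_halves, mul_one, add_comm, hp1]

lemma exists_pos_le_siteLaw {p : ℝ} (hp : p ∈ Set.Ioo (0 : ℝ) 1) {q : ℕ → ℝ} {k : ℕ}
    (hqk : 0 < q k) : ∃ w : ℝ≥0∞, w ≠ 0 ∧ ∀ b c : Bool, w ≤ siteLaw p q (b, c, k) := by
  have hpos : ∀ b c : Bool, siteLaw p q (b, c, k) ≠ 0 := fun b c => by
    have : 0 < if b then p else 1 - p := by split_ifs <;> linarith [hp.1, hp.2]
    simp [siteLaw, this, hqk]
  refine ⟨min (siteLaw p q (true, true, k)) (siteLaw p q (false, true, k)),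
    (lt_min (hpos _ _).bot_lt (hpos _ _).bot_lt).ne', fun b c => ?_⟩
  cases b
  · exact min_le_right _ _
  · exact min_le_left _ _

lemma iSup_toReal_pos_and_lt_one {g : ℤ → ℝ≥0∞} {v : ℝ≥0∞} (hv : v ≠ 0)
    (hg : ∀ m, 1 ≤ m → g m ≤ 1 - v) (hg1 : g 1 ≠ 0) :
    (0 < ⨆ m : ℤ, ⨆ _ : 1 ≤ m, (g m).toReal) ∧ (⨆ m : ℤ, ⨆ _ : 1 ≤ m, (g m).toReal) < 1 := by
  have hle : ∀ m, 1 ≤ m → (g m).toReal ≤ (1 - v).toReal := fun m hm =>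
    ENNReal.toReal_mono (ENNReal.sub_ne_top ENNReal.one_ne_top) (hg m hm)
  have hr : (1 - v).toReal < 1 := by
    simpa using (ENNReal.toReal_lt_toReal (ENNReal.sub_ne_top ENNReal.one_ne_top)
      ENNReal.one_ne_top).2 (ENNReal.sub_lt_self ENNReal.one_ne_top one_ne_zero hv)
  have hg1pos : 0 < (g 1).toReal := ENNReal.toReal_pos hg1
    (ne_top_of_le_ne_top ENNReal.one_ne_top ((hg 1 le_rfl).trans tsub_le_self))
  have hr0 : 0 ≤ (1 - v).toReal := ENNReal.toReal_nonneg
  have hsup : ∀ m, ⨆ _ : 1 ≤ m, (g m).toReal ≤ (1 - v).toReal := fun m =>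
    Real.iSup_le (hle m) hr0
  refine ⟨?_, (Real.iSup_le hsup hr0).trans_lt hr⟩
  calc 0 < (g 1).toReal := hg1pos
    _ = ⨆ _ : (1 : ℤ) ≤ 1, (g 1).toReal :=
        (ciSup_pos (f := fun _ : (1 : ℤ) ≤ 1 => (g 1).toReal) le_rfl).symm
    _ ≤ ⨆ m : ℤ, ⨆ _ : 1 ≤ m, (g m).toReal :=
        le_ciSup ⟨_, Set.forall_mem_range.2 hsup⟩ (1 : ℤ)

theorem stmt13_general {Ω : Type*} [MeasurableSpace Ω] (μ : Measure Ω) [IsProbabilityMeasure μ]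
    (p : ℝ) (hp : p ∈ Set.Ioo (0 : ℝ) 1)
    (q : ℕ → ℝ) (hq : ∀ n, 0 ≤ q n) (hqsum : ∑' n, q n = 1)
    (η : Ω → ℤ → Bool) (θ : Ω → ℤ → Bool) (ζ : Ω → ℤ → ℕ)
    (hindep : iIndepFun
      (fun z : ℤ => fun ω => (η ω z, θ ω z, ζ ω z)) μ)
    (hdist : ∀ (z : ℤ) (b c : Bool) (n : ℕ),
      μ {ω | η ω z = b ∧ θ ω z = c ∧ ζ ω z = n}
        = ENNReal.ofReal (if b then p else 1 - p) * (1 / 2) * ENNReal.ofReal (q n))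
    (k : ℕ) (hk : 1 ≤ k) (hqk : 0 < q k) :
    (0 < ⨆ m : ℤ, ⨆ _ : 1 ≤ m,
        (μ {ω | kthOpen (η ω) (θ ω m) m (ζ ω m)
            - kthOpen (η ω) (θ ω 0) 0 (ζ ω 0) = m}).toReal) ∧
    (⨆ m : ℤ, ⨆ _ : 1 ≤ m,
        (μ {ω | kthOpen (η ω) (θ ω m) m (ζ ω m)
            - kthOpen (η ω) (θ ω 0) 0 (ζ ω 0) = m}).toReal) < 1 := by
  set T : ℤ → Ω → Bool × Bool × ℕ := fun z ω => (η ω z, θ ω z, ζ ω z)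
  have hlaw : ∀ z s, μ (T z ⁻¹' {s}) = siteLaw p q s := fun z ⟨b, c, n⟩ =>
    (congrArg μ (by ext ω; simp [T])).trans (hdist z b c n)
  have hmass : ∀ z, ∑' s, μ (T z ⁻¹' {s}) = 1 := fun z => by
    simp only [hlaw z]; exact tsum_siteLaw hp hq hqsum
  obtain ⟨w, hw0, hw⟩ := exists_pos_le_siteLaw hp hqk
  have hw1 : w ≤ 1 := (hw true true).trans (hlaw 0 _ ▸ prob_le_one)
  have hconfig : ∀ (F : Finset ℤ) (c : ℤ → Bool × Bool × ℕ), F.card ≤ 2 * k + 1 →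
      (∀ z, (c z).2.2 = k) → w ^ (2 * k + 1) ≤ μ (⋂ z ∈ F, T z ⁻¹' {c z}) := by
    refine fun F c hF hc => (pow_le_pow_right_of_le_one' hw1 hF).trans
      (hindep.pow_card_le_measure_biInter_preimage fun z _ => ?_)
    rw [hlaw, ← Prod.mk.eta (p := c z), ← Prod.mk.eta (p := (c z).2), hc z]
    exact hw _ _
  apply iSup_toReal_pos_and_lt_one (pow_ne_zero _ hw0)
  · intro m hm
    obtain ⟨F, c, hF, hc, hne⟩ := exists_config_drainageStep_sub_ne hk (m := m) (by omega)
    calc _ ≤ μ (⋂ z ∈ F, T z ⁻¹' {c z})ᶜ :=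
          measure_mono fun ω hω hωF => hne (fun z => T z ω) (Set.mem_iInter₂.1 hωF) hω
      _ ≤ 1 - μ (⋂ z ∈ F, T z ⁻¹' {c z}) := hindep.measure_compl_biInter_preimage_le hmass F _
      _ ≤ 1 - w ^ (2 * k + 1) := tsub_le_tsub_left (hconfig F c hF hc) 1
  · obtain ⟨F, c, hF, hc, heq⟩ := exists_config_drainageStep_one_sub_zero hk
    refine (lt_of_lt_of_le (pow_ne_zero _ hw0).bot_lt ((hconfig F c hF hc).trans
      (measure_mono fun ω hωF => ?_))).ne'
    exact heq (fun z => T z ω) (Set.mem_iInter₂.1 hωF)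

/-- In the generalized drainage network, the probability that the two walks at distance `m`
move by the same amount in one step (i.e. `Z^m₁ − Z⁰₁ = m`, i.e. `(U₁(m),V₁(m)) = (0,0)`) is,
as `m` ranges over positive integers, uniformly bounded away from `0` and from `1`. -/
theorem stmt13 {Ω : Type*} [MeasurableSpace Ω] (μ : Measure Ω) [IsProbabilityMeasure μ]
    (p : ℝ) (hp : p ∈ Set.Ioo (0 : ℝ) 1)
    (q : ℕ → ℝ) (hq : ∀ n, 0 ≤ q n) (hq0 : q 0 = 0) (hqsum : ∑' n, q n = 1)
    (η : Ω → ℤ → Bool) (θ : Ω → ℤ → Bool) (ζ : Ω → ℤ → ℕ)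
    (hindep : iIndepFun
      (fun z : ℤ => fun ω => (η ω z, θ ω z, ζ ω z)) μ)
    (hdist : ∀ (z : ℤ) (b c : Bool) (n : ℕ),
      μ {ω | η ω z = b ∧ θ ω z = c ∧ ζ ω z = n}
        = ENNReal.ofReal (if b then p else 1 - p) * (1 / 2) * ENNReal.ofReal (q n))
    (k : ℕ) (hk : 1 ≤ k) (hqk : 0 < q k) :
    (0 < ⨆ m : ℤ, ⨆ _ : 1 ≤ m,
        (μ {ω | kthOpen (η ω) (θ ω m) m (ζ ω m)
            - kthOpen (η ω) (θ ω 0) 0 (ζ ω 0) = m}).toReal) ∧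
    (⨆ m : ℤ, ⨆ _ : 1 ≤ m,
        (μ {ω | kthOpen (η ω) (θ ω m) m (ζ ω m)
            - kthOpen (η ω) (θ ω 0) 0 (ζ ω 0) = m}).toReal) < 1 :=
  stmt13_general μ p hp q hq hqsum η θ ζ hindep hdist k hk hqk
end
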